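/- arXiv:1410.8669 — 7 statements merged into one kernel-verified Lean document; each statement's English description precedes it below -/
import Mathlib

section
/- Let k, H ∈ ℝ and let I ⊆ ℝ be an open interval. Suppose u, σ : ℝ → ℝ are differentiable on I, with u(s) > 0 and 1 + (k/4)·u(s)² > 0 for all s ∈ I, and suppose that for all s ∈ I: u'(s) = (1 + (k/4)·u(s)²)·cos σ(s) and σ'(s) = 2H − (1/u(s) − (k/4)·u(s))·sin σ(s). Then the function J(s) = (u(s)/(1 + (k/4)·u(s)²))·(sin σ(s) − H·u(s)) has derivative zero at every point of I; in particular J is constant on I. -/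
open Real

noncomputable def profileFirstIntegral (k H x y : ℝ) : ℝ :=
  x / (1 + (k / 4) * x ^ 2) * (sin y - H * x)

section

variable {k H s u' σ' : ℝ} {u σ : ℝ → ℝ}

theorem HasDerivAt.div_one_add_mul_sq (hu : HasDerivAt u u' s)
    (hD : 1 + (k / 4) * u s ^ 2 ≠ 0) :
    HasDerivAt (fun t => u t / (1 + (k / 4) * u t ^ 2))
      ((1 - (k / 4) * u s ^ 2) / (1 + (k / 4) * u s ^ 2) ^ 2 * u') s := by
  have hD' : HasDerivAt (fun t => 1 + (k / 4) * u t ^ 2) ((k / 4) * (2 * u s * u')) s := by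
    simpa using ((hu.pow 2).const_mul (k / 4)).const_add 1
  exact (hu.div hD' hD).congr_deriv (by ring)

theorem hasDerivAt_profileFirstIntegral (hu : HasDerivAt u u' s) (hσ : HasDerivAt σ σ' s)
    (hD : 1 + (k / 4) * u s ^ 2 ≠ 0) :
    HasDerivAt (fun t => profileFirstIntegral k H (u t) (σ t))
      ((1 - (k / 4) * u s ^ 2) / (1 + (k / 4) * u s ^ 2) ^ 2 * u' * (sin (σ s) - H * u s) +
        u s / (1 + (k / 4) * u s ^ 2) * (cos (σ s) * σ' - H * u')) s :=
  (hu.div_one_add_mul_sq hD).mul (hσ.sin.sub (hu.const_mul H))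

theorem hasDerivAt_profileFirstIntegral_of_profile_system
    (hu : HasDerivAt u ((1 + (k / 4) * u s ^ 2) * cos (σ s)) s)
    (hσ : HasDerivAt σ (2 * H - (1 / u s - (k / 4) * u s) * sin (σ s)) s)
    (hu0 : u s ≠ 0) (hD : 1 + (k / 4) * u s ^ 2 ≠ 0) :
    HasDerivAt (fun t => profileFirstIntegral k H (u t) (σ t)) 0 s := by
  -- With the system substituted, the derivative is `cos σ / (1 + (k/4)u²)` times
  -- `(1 - (k/4)u²)(sin σ - Hu) + 2Hu - (1 - (k/4)u²) sin σ - Hu(1 + (k/4)u²) = 0`.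
  convert hasDerivAt_profileFirstIntegral hu hσ hD using 1
  field_simp
  ring

end

/-- The function `J(s) = (u(s)/(1 + (k/4)u(s)²))·(sin σ(s) − H·u(s))` is a first
integral of the profile-curve ODE system
`u' = (1 + (k/4)u²)·cos σ`, `σ' = 2H − (1/u − (k/4)u)·sin σ`
on an open interval where `u > 0` and `1 + (k/4)u² > 0`: it has derivative zero at
every point of the interval, and in particular is constant on the interval. -/
theorem first_integral_of_profile_system
    (k H a b : ℝ) (u σ : ℝ → ℝ)
    (hu_pos : ∀ s ∈ Set.Ioo a b, 0 < u s)
    (hden_pos : ∀ s ∈ Set.Ioo a b, 0 < 1 + (k / 4) * (u s) ^ 2)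
    (hu' : ∀ s ∈ Set.Ioo a b,
      HasDerivAt u ((1 + (k / 4) * (u s) ^ 2) * Real.cos (σ s)) s)
    (hσ' : ∀ s ∈ Set.Ioo a b,
      HasDerivAt σ (2 * H - (1 / u s - (k / 4) * u s) * Real.sin (σ s)) s) :
    (∀ s ∈ Set.Ioo a b,
      HasDerivAt (fun t => (u t / (1 + (k / 4) * (u t) ^ 2)) *
        (Real.sin (σ t) - H * u t)) 0 s) ∧
    (∀ s ∈ Set.Ioo a b, ∀ t ∈ Set.Ioo a b,
      (u s / (1 + (k / 4) * (u s) ^ 2)) * (Real.sin (σ s) - H * u s) =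
      (u t / (1 + (k / 4) * (u t) ^ 2)) * (Real.sin (σ t) - H * u t)) := by
  have hJ : ∀ s ∈ Set.Ioo a b, HasDerivAt (fun t => profileFirstIntegral k H (u t) (σ t)) 0 s :=
    fun s hs => hasDerivAt_profileFirstIntegral_of_profile_system (hu' s hs) (hσ' s hs)
      (hu_pos s hs).ne' (hden_pos s hs).ne'
  refine ⟨hJ, fun s hs t ht => isOpen_Ioo.is_const_of_deriv_eq_zero isPreconnected_Ioo
    (fun x hx => (hJ x hx).differentiableAt.differentiableWithinAt)
    (fun x hx => (hJ x hx).deriv) hs ht⟩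
end

section
/- Let k, τ ∈ ℝ and let I ⊆ ℝ be an open interval. Suppose u, σ : ℝ → ℝ are differentiable on I, with u(s) > 0 and 1 + (k/4)·u(s)² > 0 for all s ∈ I, and u'(s) = (1 + (k/4)·u(s)²)·cos σ(s) for all s ∈ I. Then for every s ∈ I, (σ'(s)·sin σ(s)/u(s) − (k/4)·sin² σ(s) + (k/4 − τ²)·cos² σ(s)/(1 + τ²·u(s)²) + k/4)·(u(s)·√(1 + τ²·u(s)²)/(1 + (k/4)·u(s)²)) equals the derivative at s of the function t ↦ −u'(t)·√(1 + τ²·u(t)²)/(1 + (k/4)·u(t)²)². -/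
/-!
Where `u' = (1 + (k/4)u²) cos σ`, the function `-u'·√(1 + τ²u²)/(1 + (k/4)u²)²` agrees with
`-cos σ·√(1 + τ²u²)/(1 + (k/4)u²)`, which is differentiated by the chain rule. Substituting
`u'` once more and `sin² σ = 1 - cos² σ`, the difference from the integrand is a multiple of
`(k/4)·((1 + τ²u²) - 1) - τ²·((1 + (k/4)u²) - 1) = 0`.
-/

open Real Filter Topology Set

lemma hasDerivAt_one_add_mul_sq {u : ℝ → ℝ} {u₀' s : ℝ} (c : ℝ) (hu : HasDerivAt u u₀' s) :
    HasDerivAt (fun t => 1 + c * u t ^ 2) (2 * c * u s * u₀') s :=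
  (((hu.fun_pow 2).const_mul c).const_add 1).congr_deriv (by push_cast; ring)

lemma hasDerivAt_sqrt_one_add_sq_mul_sq {u : ℝ → ℝ} {u₀' s : ℝ} (τ : ℝ)
    (hu : HasDerivAt u u₀' s) :
    HasDerivAt (fun t => √(1 + τ ^ 2 * u t ^ 2))
      (τ ^ 2 * u s * u₀' / √(1 + τ ^ 2 * u s ^ 2)) s := by
  have hQ : √(1 + τ ^ 2 * u s ^ 2) ≠ 0 := (sqrt_pos.mpr (by positivity)).ne'
  refine ((hasDerivAt_one_add_mul_sq (τ ^ 2) hu).sqrt (by positivity)).congr_deriv ?_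
  field_simp

lemma hasDerivAt_neg_cos_mul_sqrt_div {u σ : ℝ → ℝ} {u₀' σ₀' s : ℝ} (k τ : ℝ)
    (hu : HasDerivAt u u₀' s) (hσ : HasDerivAt σ σ₀' s) (hD : 1 + k / 4 * u s ^ 2 ≠ 0) :
    HasDerivAt (fun t => -cos (σ t) * √(1 + τ ^ 2 * u t ^ 2) / (1 + k / 4 * u t ^ 2))
      (σ₀' * sin (σ s) * √(1 + τ ^ 2 * u s ^ 2) / (1 + k / 4 * u s ^ 2)
        - cos (σ s) * (τ ^ 2 * u s * u₀') / (√(1 + τ ^ 2 * u s ^ 2) * (1 + k / 4 * u s ^ 2))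
        + cos (σ s) * √(1 + τ ^ 2 * u s ^ 2) * (k / 2 * u s * u₀') /
          (1 + k / 4 * u s ^ 2) ^ 2) s := by
  have hQ : √(1 + τ ^ 2 * u s ^ 2) ≠ 0 := (sqrt_pos.mpr (by positivity)).ne'
  refine ((hσ.cos.neg.mul (hasDerivAt_sqrt_one_add_sq_mul_sq τ hu)).fun_div
    (hasDerivAt_one_add_mul_sq (k / 4) hu) hD).congr_deriv ?_
  simp only [Pi.neg_apply, Pi.mul_apply]
  field_simp
  ring

lemma neg_mul_sqrt_div_sq_eventuallyEq {k τ s : ℝ} {u σ u' : ℝ → ℝ}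
    (hode : ∀ᶠ t in 𝓝 s, u' t = (1 + k / 4 * u t ^ 2) * cos (σ t))
    (hD : ∀ᶠ t in 𝓝 s, 1 + k / 4 * u t ^ 2 ≠ 0) :
    (fun t => -u' t * √(1 + τ ^ 2 * u t ^ 2) / (1 + k / 4 * u t ^ 2) ^ 2) =ᶠ[𝓝 s]
      fun t => -cos (σ t) * √(1 + τ ^ 2 * u t ^ 2) / (1 + k / 4 * u t ^ 2) := by
  filter_upwards [hode, hD] with t hode_t hD_t
  rw [hode_t]
  field_simp

lemma neg_cos_mul_sqrt_div_deriv_eq_integrand {k τ u c sn σ₀' Q : ℝ} (hu : u ≠ 0)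
    (hD : 1 + k / 4 * u ^ 2 ≠ 0) (hQ : Q ^ 2 = 1 + τ ^ 2 * u ^ 2) (hQ0 : Q ≠ 0)
    (hsc : sn ^ 2 + c ^ 2 = 1) :
    σ₀' * sn * Q / (1 + k / 4 * u ^ 2)
        - c * (τ ^ 2 * u * ((1 + k / 4 * u ^ 2) * c)) / (Q * (1 + k / 4 * u ^ 2))
        + c * Q * (k / 2 * u * ((1 + k / 4 * u ^ 2) * c)) / (1 + k / 4 * u ^ 2) ^ 2
      = (σ₀' * sn / u - k / 4 * sn ^ 2 + (k / 4 - τ ^ 2) * c ^ 2 / (1 + τ ^ 2 * u ^ 2) + k / 4)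
          * (u * Q / (1 + k / 4 * u ^ 2)) := by
  -- otherwise `field_simp` clears this denominator only partly
  set D := 1 + k / 4 * u ^ 2
  rw [← hQ]
  field_simp
  linear_combination 2 * Q ^ 2 * k * u * hsc + 2 * k * u * c ^ 2 * hQ

/-- For a profile curve with `u' = (1 + (k/4)u²)·cos σ` on an open interval where
`u > 0` and `1 + (k/4)u² > 0`, the integrand of the second summand of the
rotationally invariant Willmore-like energy,
`(σ'·sin σ/u − (k/4)sin²σ + (k/4 − τ²)cos²σ/(1 + τ²u²) + k/4)·(u√(1 + τ²u²)/(1 + (k/4)u²))`,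
is the derivative of `t ↦ −u'(t)·√(1 + τ²u(t)²)/(1 + (k/4)u(t)²)²`. -/
theorem topological_integrand_is_exact_derivative
    (k τ a b : ℝ) (u σ u' σ' : ℝ → ℝ)
    (hu' : ∀ s ∈ Set.Ioo a b, HasDerivAt u (u' s) s)
    (hσ' : ∀ s ∈ Set.Ioo a b, HasDerivAt σ (σ' s) s)
    (hu_pos : ∀ s ∈ Set.Ioo a b, 0 < u s)
    (hden_pos : ∀ s ∈ Set.Ioo a b, 0 < 1 + (k / 4) * (u s) ^ 2)
    (hode : ∀ s ∈ Set.Ioo a b,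
      u' s = (1 + (k / 4) * (u s) ^ 2) * Real.cos (σ s)) :
    ∀ s ∈ Set.Ioo a b,
      HasDerivAt
        (fun t => -(u' t) * Real.sqrt (1 + τ ^ 2 * (u t) ^ 2) /
          (1 + (k / 4) * (u t) ^ 2) ^ 2)
        ((σ' s * Real.sin (σ s) / u s - (k / 4) * Real.sin (σ s) ^ 2 +
            (k / 4 - τ ^ 2) * Real.cos (σ s) ^ 2 / (1 + τ ^ 2 * (u s) ^ 2) +
            k / 4) *
          (u s * Real.sqrt (1 + τ ^ 2 * (u s) ^ 2) /
            (1 + (k / 4) * (u s) ^ 2))) s := by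
  intro s hs
  have hI : ∀ᶠ t in 𝓝 s, t ∈ Ioo a b := Ioo_mem_nhds hs.1 hs.2
  have hD : 1 + k / 4 * u s ^ 2 ≠ 0 := (hden_pos s hs).ne'
  have hW : 0 < 1 + τ ^ 2 * u s ^ 2 := by positivity
  refine ((hasDerivAt_neg_cos_mul_sqrt_div k τ (hu' s hs) (hσ' s hs) hD).congr_of_eventuallyEq
    (neg_mul_sqrt_div_sq_eventuallyEq (hI.mono hode)
      (hI.mono fun t ht => (hden_pos t ht).ne'))).congr_deriv ?_
  rw [hode s hs]
  exact neg_cos_mul_sqrt_div_deriv_eq_integrand (hu_pos s hs).ne' hD (sq_sqrt hW.le)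
    (sqrt_pos.mpr hW).ne' (sin_sq_add_cos_sq _)
end

section
/- Let k, τ ∈ ℝ and L > 0. Suppose u, σ : [0, L] → ℝ are continuous on [0, L] and differentiable on (0, L), with u continuously differentiable on [0, L], u(0) = u(L) = 0, u(s) > 0 for s ∈ (0, L), 1 + (k/4)·u(s)² > 0 for all s ∈ [0, L], cos σ(0) = 1, cos σ(L) = −1, and u'(s) = (1 + (k/4)·u(s)²)·cos σ(s) for all s ∈ [0, L]. Assume the function g(s) = (σ'(s)·sin σ(s)/u(s) − (k/4)·sin² σ(s) + (k/4 − τ²)·cos² σ(s)/(1 + τ²·u(s)²) + k/4)·(u(s)·√(1 + τ²·u(s)²)/(1 + (k/4)·u(s)²)) is interval-integrable on [0, L]. Then 2π·∫₀^L g(s) ds = 4π. -/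
/-!
The integrand is an exact derivative along the profile: using `u' = (1 + (k/4)u²) cos σ`
and `sin² σ + cos² σ = 1`, it is the derivative of `-cos σ · √(1 + τ²u²) / (1 + (k/4)u²)`.
At the poles `u = 0`, so this primitive equals `-cos σ`, which is `-1` at `s = 0` and `1`
at `s = L`; the fundamental theorem of calculus gives `∫₀^L g = 2`.
-/

open MeasureTheory intervalIntegral Real Set

namespace RotationalSphere

variable (k τ : ℝ)

noncomputable def topologicalDensity (x θ θ' : ℝ) : ℝ :=
  (θ' * sin θ / x - k / 4 * sin θ ^ 2 + (k / 4 - τ ^ 2) * cos θ ^ 2 / (1 + τ ^ 2 * x ^ 2) +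
      k / 4) * (x * √(1 + τ ^ 2 * x ^ 2) / (1 + k / 4 * x ^ 2))

noncomputable def topologicalPrimitive (x θ : ℝ) : ℝ :=
  -cos θ * √(1 + τ ^ 2 * x ^ 2) / (1 + k / 4 * x ^ 2)

lemma topologicalPrimitive_zero (θ : ℝ) : topologicalPrimitive k τ 0 θ = -cos θ := by
  simp [topologicalPrimitive]

lemma continuousOn_topologicalPrimitive_comp {u σ : ℝ → ℝ} {S : Set ℝ}
    (hu : ContinuousOn u S) (hσ : ContinuousOn σ S)
    (hden : ∀ s ∈ S, 1 + k / 4 * u s ^ 2 ≠ 0) :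
    ContinuousOn (fun s => topologicalPrimitive k τ (u s) (σ s)) S :=
  ContinuousOn.div (by fun_prop) (by fun_prop) hden

lemma hasDerivAt_topologicalPrimitive_comp {u σ : ℝ → ℝ} {σ' s : ℝ}
    (hu : HasDerivAt u ((1 + k / 4 * u s ^ 2) * cos (σ s)) s) (hσ : HasDerivAt σ σ' s)
    (hu0 : u s ≠ 0) (hden : 1 + k / 4 * u s ^ 2 ≠ 0) :
    HasDerivAt (fun t => topologicalPrimitive k τ (u t) (σ t))
      (topologicalDensity k τ (u s) (σ s) σ') s := by
  have hq : 0 < 1 + τ ^ 2 * u s ^ 2 := by positivity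
  have hsqrt_deriv : HasDerivAt (fun t => √(1 + τ ^ 2 * u t ^ 2))
      (τ ^ 2 * (2 * u s * ((1 + k / 4 * u s ^ 2) * cos (σ s))) / (2 * √(1 + τ ^ 2 * u s ^ 2)))
      s := by
    simpa using (((hu.fun_pow 2).const_mul (τ ^ 2)).const_add 1).sqrt hq.ne'
  have hden_deriv : HasDerivAt (fun t => 1 + k / 4 * u t ^ 2)
      (k / 4 * (2 * u s * ((1 + k / 4 * u s ^ 2) * cos (σ s)))) s := by
    simpa using ((hu.fun_pow 2).const_mul (k / 4)).const_add 1
  refine ((hσ.cos.fun_neg.fun_mul hsqrt_deriv).fun_div hden_deriv hden).congr_deriv ?_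
  unfold topologicalDensity
  have hsqrt := sq_sqrt hq.le
  have hsqrt_pos := sqrt_pos.mpr hq
  rw [sin_sq]
  field_simp
  rw [hsqrt]
  ring

end RotationalSphere

open RotationalSphere in
theorem topological_summand_eq_four_pi_general
    (k τ L : ℝ) (hL : 0 < L) (u σ u' σ' : ℝ → ℝ)
    (hu_cont : ContinuousOn u (Set.Icc 0 L))
    (hσ_cont : ContinuousOn σ (Set.Icc 0 L))
    (hu_deriv : ∀ s ∈ Set.Icc 0 L, HasDerivWithinAt u (u' s) (Set.Icc 0 L) s)
    (hσ_deriv : ∀ s ∈ Set.Ioo 0 L, HasDerivAt σ (σ' s) s)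
    (hu0 : u 0 = 0) (huL : u L = 0)
    (hu_pos : ∀ s ∈ Set.Ioo 0 L, 0 < u s)
    (hden_pos : ∀ s ∈ Set.Icc 0 L, 0 < 1 + (k / 4) * (u s) ^ 2)
    (hσ0 : Real.cos (σ 0) = 1) (hσL : Real.cos (σ L) = -1)
    (hode : ∀ s ∈ Set.Icc 0 L,
      u' s = (1 + (k / 4) * (u s) ^ 2) * Real.cos (σ s))
    (hint : IntervalIntegrable
      (fun s => (σ' s * Real.sin (σ s) / u s - (k / 4) * Real.sin (σ s) ^ 2 +
          (k / 4 - τ ^ 2) * Real.cos (σ s) ^ 2 / (1 + τ ^ 2 * (u s) ^ 2) +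
          k / 4) *
        (u s * Real.sqrt (1 + τ ^ 2 * (u s) ^ 2) / (1 + (k / 4) * (u s) ^ 2)))
      volume 0 L) :
    2 * Real.pi *
      ∫ s in (0 : ℝ)..L,
        (σ' s * Real.sin (σ s) / u s - (k / 4) * Real.sin (σ s) ^ 2 +
            (k / 4 - τ ^ 2) * Real.cos (σ s) ^ 2 / (1 + τ ^ 2 * (u s) ^ 2) +
            k / 4) *
          (u s * Real.sqrt (1 + τ ^ 2 * (u s) ^ 2) /
            (1 + (k / 4) * (u s) ^ 2)) = 4 * Real.pi := by
  have hderiv : ∀ s ∈ Ioo 0 L, HasDerivAt (fun t => topologicalPrimitive k τ (u t) (σ t))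
      (topologicalDensity k τ (u s) (σ s) (σ' s)) s := by
    intro s hs
    have hu : HasDerivAt u (u' s) s := (hu_deriv s (Ioo_subset_Icc_self hs)).hasDerivAt
      (Icc_mem_nhds hs.1 hs.2)
    rw [hode s (Ioo_subset_Icc_self hs)] at hu
    exact hasDerivAt_topologicalPrimitive_comp k τ hu (hσ_deriv s hs) (hu_pos s hs).ne'
      (hden_pos s (Ioo_subset_Icc_self hs)).ne'
  have hcont := continuousOn_topologicalPrimitive_comp k τ hu_cont hσ_cont
    fun s hs => (hden_pos s hs).ne'
  change 2 * π * ∫ s in (0 : ℝ)..L, topologicalDensity k τ (u s) (σ s) (σ' s) = 4 * π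
  rw [integral_eq_sub_of_hasDerivAt_of_le hL.le hcont hderiv hint, hu0, huL,
    topologicalPrimitive_zero, topologicalPrimitive_zero, hσ0, hσL]
  ring

/-- For a rotationally invariant sphere profile: `u, σ` continuous on `[0, L]` and
differentiable on `(0, L)`, `u` continuously differentiable on `[0, L]`,
`u(0) = u(L) = 0`, `u > 0` on `(0, L)`, `1 + (k/4)u² > 0` on `[0, L]`,
`cos σ(0) = 1`, `cos σ(L) = −1`, and `u' = (1 + (k/4)u²)·cos σ` on `[0, L]`.
If the integrand `g` of the second (topological) summand of the Willmore-like
energy is interval-integrable on `[0, L]`, then `2π∫₀^L g = 4π`. -/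
theorem topological_summand_eq_four_pi
    (k τ L : ℝ) (hL : 0 < L) (u σ u' σ' : ℝ → ℝ)
    (hu_cont : ContinuousOn u (Set.Icc 0 L))
    (hσ_cont : ContinuousOn σ (Set.Icc 0 L))
    (hu_deriv : ∀ s ∈ Set.Icc 0 L, HasDerivWithinAt u (u' s) (Set.Icc 0 L) s)
    (hu'_cont : ContinuousOn u' (Set.Icc 0 L))
    (hσ_deriv : ∀ s ∈ Set.Ioo 0 L, HasDerivAt σ (σ' s) s)
    (hu0 : u 0 = 0) (huL : u L = 0)
    (hu_pos : ∀ s ∈ Set.Ioo 0 L, 0 < u s)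
    (hden_pos : ∀ s ∈ Set.Icc 0 L, 0 < 1 + (k / 4) * (u s) ^ 2)
    (hσ0 : Real.cos (σ 0) = 1) (hσL : Real.cos (σ L) = -1)
    (hode : ∀ s ∈ Set.Icc 0 L,
      u' s = (1 + (k / 4) * (u s) ^ 2) * Real.cos (σ s))
    (hint : IntervalIntegrable
      (fun s => (σ' s * Real.sin (σ s) / u s - (k / 4) * Real.sin (σ s) ^ 2 +
          (k / 4 - τ ^ 2) * Real.cos (σ s) ^ 2 / (1 + τ ^ 2 * (u s) ^ 2) +
          k / 4) *
        (u s * Real.sqrt (1 + τ ^ 2 * (u s) ^ 2) / (1 + (k / 4) * (u s) ^ 2)))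
      volume 0 L) :
    2 * Real.pi *
      ∫ s in (0 : ℝ)..L,
        (σ' s * Real.sin (σ s) / u s - (k / 4) * Real.sin (σ s) ^ 2 +
            (k / 4 - τ ^ 2) * Real.cos (σ s) ^ 2 / (1 + τ ^ 2 * (u s) ^ 2) +
            k / 4) *
          (u s * Real.sqrt (1 + τ ^ 2 * (u s) ^ 2) /
            (1 + (k / 4) * (u s) ^ 2)) = 4 * Real.pi :=
  topological_summand_eq_four_pi_general k τ L hL u σ u' σ' hu_cont hσ_cont hu_deriv hσ_deriv hu0
    huL hu_pos hden_pos hσ0 hσL hode hint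
end

section
/- Let k, τ, H ∈ ℝ and let I ⊆ ℝ be an open interval. Suppose u, σ : ℝ → ℝ are differentiable on I with u twice differentiable on I, u(s) > 0 and 1 + (k/4)·u(s)² > 0 for all s ∈ I, and for all s ∈ I: u'(s) = (1 + (k/4)·u(s)²)·cos σ(s), σ'(s) = 2H − (1/u(s) − (k/4)·u(s))·sin σ(s), and sin σ(s) = H·u(s). Let w(s) = u(s)·√(1 + τ²·u(s)²)/(1 + (k/4)·u(s)²) and g(s) = u(s)·cos σ(s)·sin σ(s)/((1 + (k/4)·u(s)²)·√(1 + τ²·u(s)²)). Then w is twice differentiable on I, g is differentiable on I, and for every s ∈ I: 2H³ + H·(2·((1 + (k/4)·u(s)²)/(u(s)·√(1 + τ²·u(s)²)))·w''(s) + (1/2)·(k − 4τ²)·cos² σ(s)/(1 + τ²·u(s)²) + k/2) + (1/2)·(k − 4τ²)·((1 + (k/4)·u(s)²)/(u(s)·√(1 + τ²·u(s)²)))·g'(s) = 0. -/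
/-!
On a CMC sphere the angle equation collapses to `σ' = H (1 + (k/4) u²)`, and the profile equation
`u' = (1 + (k/4) u²) cos σ` turns the derivative of `w` into
`w' = cos σ · (1 + (2τ² - k/4) u²) / (√(1 + τ²u²) (1 + (k/4) u²))`,
which can be differentiated again without knowing `u''`. Substituting `w''`, `g'`, `sin σ = H u`
and `cos² σ = 1 - H² u²` into the Euler–Lagrange expression leaves a rational identity in `u`.
-/

open Filter Topology Real

section
variable {f : ℝ → ℝ} {f' x : ℝ}

theorem HasDerivAt.one_add_mul_sq (c : ℝ) (hf : HasDerivAt f f' x) :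
    HasDerivAt (fun y => 1 + c * f y ^ 2) (2 * c * f x * f') x :=
  (((hf.fun_pow 2).const_mul c).const_add 1).congr_deriv (by norm_num; ring)

theorem HasDerivAt.sqrt_one_add_mul_sq (c : ℝ) (hf : HasDerivAt f f' x)
    (hpos : 0 < 1 + c * f x ^ 2) :
    HasDerivAt (fun y => √(1 + c * f y ^ 2)) (c * f x * f' / √(1 + c * f x ^ 2)) x := by
  have hS : √(1 + c * f x ^ 2) ≠ 0 := (Real.sqrt_pos.2 hpos).ne'
  refine ((hf.one_add_mul_sq c).sqrt hpos.ne').congr_deriv ?_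
  field_simp

variable {k : ℝ} (τ : ℝ)

local notation "𝒟" x:max => 1 + k / 4 * x ^ 2
local notation "𝒬" x:max => 1 + τ ^ 2 * x ^ 2
local notation "𝒫" x:max => 1 + (2 * τ ^ 2 - k / 4) * x ^ 2

theorem hasDerivAt_w (hf : HasDerivAt f f' x) (hD : 𝒟 (f x) ≠ 0) :
    HasDerivAt (fun y => f y * √(𝒬 (f y)) / 𝒟 (f y))
      (f' * 𝒫 (f x) / (√(𝒬 (f x)) * (𝒟 (f x)) ^ 2)) x := by
  have hS := Real.sq_sqrt (by positivity : (0 : ℝ) ≤ 𝒬 (f x))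
  have hS0 : √(𝒬 (f x)) ≠ 0 := (Real.sqrt_pos.2 (by positivity)).ne'
  refine ((hf.fun_mul (hf.sqrt_one_add_mul_sq _ (by positivity))).fun_div
    (hf.one_add_mul_sq _) hD).congr_deriv ?_
  field_simp
  rw [hS]
  ring

theorem hasDerivAt_w_slope (hf : HasDerivAt f f' x) (hD : 𝒟 (f x) ≠ 0) :
    HasDerivAt (fun y => 𝒫 (f y) / (√(𝒬 (f y)) * 𝒟 (f y)))
      (f x * ((4 * τ ^ 2 - k / 2) * 𝒟 (f x) * 𝒬 (f x) - τ ^ 2 * 𝒟 (f x) * 𝒫 (f x)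
          - k / 2 * 𝒫 (f x) * 𝒬 (f x)) * f' / (√(𝒬 (f x)) * 𝒬 (f x) * (𝒟 (f x)) ^ 2)) x := by
  have hS := Real.sq_sqrt (by positivity : (0 : ℝ) ≤ 𝒬 (f x))
  have hS0 : √(𝒬 (f x)) ≠ 0 := (Real.sqrt_pos.2 (by positivity)).ne'
  refine ((hf.one_add_mul_sq _).fun_div ((hf.sqrt_one_add_mul_sq _ (by positivity)).fun_mul
    (hf.one_add_mul_sq _)) (mul_ne_zero hS0 hD)).congr_deriv ?_
  field_simp
  rw [hS]
  ring

variable {u σ : ℝ → ℝ} {u' σ' s : ℝ}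

theorem hasDerivAt_g (hu : HasDerivAt u u' s) (hσ : HasDerivAt σ σ' s) (hD : 𝒟 (u s) ≠ 0) :
    HasDerivAt (fun t => u t * cos (σ t) * sin (σ t) / (𝒟 (u t) * √(𝒬 (u t))))
      ((cos (σ s) ^ 2 - sin (σ s) ^ 2) * σ' * (u s / (𝒟 (u s) * √(𝒬 (u s))))
        + cos (σ s) * sin (σ s) * ((𝒟 (u s) * 𝒬 (u s) - k / 2 * u s ^ 2 * 𝒬 (u s)
          - τ ^ 2 * u s ^ 2 * 𝒟 (u s)) * u' / ((𝒟 (u s)) ^ 2 * √(𝒬 (u s)) * 𝒬 (u s)))) s := by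
  have hS := Real.sq_sqrt (by positivity : (0 : ℝ) ≤ 𝒬 (u s))
  have hS0 : √(𝒬 (u s)) ≠ 0 := (Real.sqrt_pos.2 (by positivity)).ne'
  refine (((hu.fun_mul hσ.cos).fun_mul hσ.sin).fun_div ((hu.one_add_mul_sq _).fun_mul
    (hu.sqrt_one_add_mul_sq _ (by positivity))) (mul_ne_zero hD hS0)).congr_deriv ?_
  generalize √(𝒬 (u s)) = S at hS hS0 ⊢
  field_simp
  rw [hS]
  ring

theorem deriv_w_eq (hu : HasDerivAt u (𝒟 (u s) * cos (σ s)) s) (hD : 𝒟 (u s) ≠ 0) :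
    deriv (fun t => u t * √(𝒬 (u t)) / 𝒟 (u t)) s
      = cos (σ s) * (𝒫 (u s) / (√(𝒬 (u s)) * 𝒟 (u s))) := by
  rw [(hasDerivAt_w τ hu hD).deriv]
  field_simp

theorem hasDerivAt_deriv_w (hu : ∀ᶠ t in 𝓝 s, HasDerivAt u (𝒟 (u t) * cos (σ t)) t)
    (hD : ∀ᶠ t in 𝓝 s, 𝒟 (u t) ≠ 0) (hσ : HasDerivAt σ σ' s) :
    HasDerivAt (deriv fun t => u t * √(𝒬 (u t)) / 𝒟 (u t))
      (-(sin (σ s) * σ') * (𝒫 (u s) / (√(𝒬 (u s)) * 𝒟 (u s)))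
        + cos (σ s) ^ 2 * (u s * ((4 * τ ^ 2 - k / 2) * 𝒟 (u s) * 𝒬 (u s)
          - τ ^ 2 * 𝒟 (u s) * 𝒫 (u s) - k / 2 * 𝒫 (u s) * 𝒬 (u s))
          / (√(𝒬 (u s)) * 𝒬 (u s) * 𝒟 (u s)))) s := by
  refine ((hσ.cos.fun_mul (hasDerivAt_w_slope τ hu.self_of_nhds hD.self_of_nhds)).congr_deriv
    ?_).congr_of_eventuallyEq ?_
  · field_simp
  · filter_upwards [hu, hD] with t hut hDt using deriv_w_eq τ hut hDt

theorem euler_lagrange_identity {H x c : ℝ} (hx : x ≠ 0) (hD : 𝒟 x ≠ 0)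
    (hc : c ^ 2 = 1 - (H * x) ^ 2) :
    2 * H ^ 3 + H * (2 * (𝒟 x / (x * √(𝒬 x))) *
        (-(H * x * (H * 𝒟 x)) * (𝒫 x / (√(𝒬 x) * 𝒟 x))
          + c ^ 2 * (x * ((4 * τ ^ 2 - k / 2) * 𝒟 x * 𝒬 x - τ ^ 2 * 𝒟 x * 𝒫 x
            - k / 2 * 𝒫 x * 𝒬 x) / (√(𝒬 x) * 𝒬 x * 𝒟 x)))
        + 1 / 2 * (k - 4 * τ ^ 2) * c ^ 2 / 𝒬 x + k / 2)
      + 1 / 2 * (k - 4 * τ ^ 2) * (𝒟 x / (x * √(𝒬 x))) *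
        ((c ^ 2 - (H * x) ^ 2) * (H * 𝒟 x) * (x / (𝒟 x * √(𝒬 x)))
          + c * (H * x) * ((𝒟 x * 𝒬 x - k / 2 * x ^ 2 * 𝒬 x - τ ^ 2 * x ^ 2 * 𝒟 x) * (𝒟 x * c)
            / ((𝒟 x) ^ 2 * √(𝒬 x) * 𝒬 x))) = 0 := by
  have hS := Real.sq_sqrt (by positivity : (0 : ℝ) ≤ 𝒬 x)
  have hS0 : √(𝒬 x) ≠ 0 := (Real.sqrt_pos.2 (by positivity)).ne'
  have hQ : 𝒬 x ≠ 0 := by positivity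
  generalize √(𝒬 x) = S at hS hS0 ⊢
  have hD4 : 4 + k * x ^ 2 ≠ 0 := by contrapose! hD; linear_combination hD / 4
  field_simp
  rw [hS, hc]
  ring
end

theorem cmc_sphere_satisfies_euler_lagrange_general
    (k τ H a b : ℝ) (u σ u' σ' : ℝ → ℝ)
    (hu_deriv : ∀ s ∈ Set.Ioo a b, HasDerivAt u (u' s) s)
    (hσ_deriv : ∀ s ∈ Set.Ioo a b, HasDerivAt σ (σ' s) s)
    (hu_pos : ∀ s ∈ Set.Ioo a b, 0 < u s)
    (hden_pos : ∀ s ∈ Set.Ioo a b, 0 < 1 + (k / 4) * (u s) ^ 2)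
    (hode_u : ∀ s ∈ Set.Ioo a b,
      u' s = (1 + (k / 4) * (u s) ^ 2) * Real.cos (σ s))
    (hode_σ : ∀ s ∈ Set.Ioo a b,
      σ' s = 2 * H - (1 / u s - (k / 4) * u s) * Real.sin (σ s))
    (hcmc : ∀ s ∈ Set.Ioo a b, Real.sin (σ s) = H * u s) :
    (∀ s ∈ Set.Ioo a b, DifferentiableAt ℝ
        (fun t => u t * Real.sqrt (1 + τ ^ 2 * (u t) ^ 2) /
          (1 + (k / 4) * (u t) ^ 2)) s) ∧
    (∀ s ∈ Set.Ioo a b, DifferentiableAt ℝ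
        (deriv (fun t => u t * Real.sqrt (1 + τ ^ 2 * (u t) ^ 2) /
          (1 + (k / 4) * (u t) ^ 2))) s) ∧
    (∀ s ∈ Set.Ioo a b, DifferentiableAt ℝ
        (fun t => u t * Real.cos (σ t) * Real.sin (σ t) /
          ((1 + (k / 4) * (u t) ^ 2) * Real.sqrt (1 + τ ^ 2 * (u t) ^ 2))) s) ∧
    (∀ s ∈ Set.Ioo a b,
      2 * H ^ 3 +
        H * (2 * ((1 + (k / 4) * (u s) ^ 2) /
              (u s * Real.sqrt (1 + τ ^ 2 * (u s) ^ 2))) *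
            deriv (deriv (fun t => u t * Real.sqrt (1 + τ ^ 2 * (u t) ^ 2) /
              (1 + (k / 4) * (u t) ^ 2))) s +
          (1 / 2) * (k - 4 * τ ^ 2) * Real.cos (σ s) ^ 2 /
            (1 + τ ^ 2 * (u s) ^ 2) + k / 2) +
        (1 / 2) * (k - 4 * τ ^ 2) *
          ((1 + (k / 4) * (u s) ^ 2) /
            (u s * Real.sqrt (1 + τ ^ 2 * (u s) ^ 2))) *
          deriv (fun t => u t * Real.cos (σ t) * Real.sin (σ t) /
            ((1 + (k / 4) * (u t) ^ 2) * Real.sqrt (1 + τ ^ 2 * (u t) ^ 2))) s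
        = 0) := by
  have hu : ∀ s ∈ Set.Ioo a b, HasDerivAt u ((1 + k / 4 * u s ^ 2) * cos (σ s)) s :=
    fun s hs => hode_u s hs ▸ hu_deriv s hs
  have hσ : ∀ s ∈ Set.Ioo a b, HasDerivAt σ (H * (1 + k / 4 * u s ^ 2)) s := by
    intro s hs
    refine (hσ_deriv s hs).congr_deriv ?_
    have hu0 := (hu_pos s hs).ne'
    rw [hode_σ s hs, hcmc s hs]
    field_simp
    ring
  have hD : ∀ s ∈ Set.Ioo a b, 1 + k / 4 * u s ^ 2 ≠ 0 := fun s hs => (hden_pos s hs).ne'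
  have hw'' (s : ℝ) (hs : s ∈ Set.Ioo a b) :=
    hasDerivAt_deriv_w τ (eventually_of_mem (isOpen_Ioo.mem_nhds hs) hu)
      (eventually_of_mem (isOpen_Ioo.mem_nhds hs) hD) (hσ s hs)
  have hg' (s : ℝ) (hs : s ∈ Set.Ioo a b) := hasDerivAt_g τ (hu s hs) (hσ s hs) (hD s hs)
  refine ⟨fun s hs => (hasDerivAt_w τ (hu s hs) (hD s hs)).differentiableAt,
    fun s hs => (hw'' s hs).differentiableAt, fun s hs => (hg' s hs).differentiableAt,
    fun s hs => ?_⟩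
  rw [(hw'' s hs).deriv, (hg' s hs).deriv, hcmc s hs]
  exact euler_lagrange_identity τ (hu_pos s hs).ne' (hD s hs) (by rw [cos_sq', hcmc s hs])

/-- On a rotationally invariant CMC sphere profile in `E(k,τ)` (i.e. a solution of
`u' = (1 + (k/4)u²)·cos σ`, `σ' = 2H − (1/u − (k/4)u)·sin σ` with `sin σ = H·u`),
the functions `w = u√(1 + τ²u²)/(1 + (k/4)u²)` and
`g = u·cos σ·sin σ/((1 + (k/4)u²)√(1 + τ²u²))` are respectively twice
differentiable and differentiable on the interval, and the Euler–Lagrange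
expression of the Willmore-like functional vanishes:
`2H³ + H(2·((1 + (k/4)u²)/(u√(1 + τ²u²)))·w'' + (1/2)(k − 4τ²)cos²σ/(1 + τ²u²) + k/2)
 + (1/2)(k − 4τ²)·((1 + (k/4)u²)/(u√(1 + τ²u²)))·g' = 0`. -/
theorem cmc_sphere_satisfies_euler_lagrange
    (k τ H a b : ℝ) (u σ u' σ' u'' : ℝ → ℝ)
    (hu_deriv : ∀ s ∈ Set.Ioo a b, HasDerivAt u (u' s) s)
    (hu_deriv2 : ∀ s ∈ Set.Ioo a b, HasDerivAt u' (u'' s) s)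
    (hσ_deriv : ∀ s ∈ Set.Ioo a b, HasDerivAt σ (σ' s) s)
    (hu_pos : ∀ s ∈ Set.Ioo a b, 0 < u s)
    (hden_pos : ∀ s ∈ Set.Ioo a b, 0 < 1 + (k / 4) * (u s) ^ 2)
    (hode_u : ∀ s ∈ Set.Ioo a b,
      u' s = (1 + (k / 4) * (u s) ^ 2) * Real.cos (σ s))
    (hode_σ : ∀ s ∈ Set.Ioo a b,
      σ' s = 2 * H - (1 / u s - (k / 4) * u s) * Real.sin (σ s))
    (hcmc : ∀ s ∈ Set.Ioo a b, Real.sin (σ s) = H * u s) :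
    (∀ s ∈ Set.Ioo a b, DifferentiableAt ℝ
        (fun t => u t * Real.sqrt (1 + τ ^ 2 * (u t) ^ 2) /
          (1 + (k / 4) * (u t) ^ 2)) s) ∧
    (∀ s ∈ Set.Ioo a b, DifferentiableAt ℝ
        (deriv (fun t => u t * Real.sqrt (1 + τ ^ 2 * (u t) ^ 2) /
          (1 + (k / 4) * (u t) ^ 2))) s) ∧
    (∀ s ∈ Set.Ioo a b, DifferentiableAt ℝ
        (fun t => u t * Real.cos (σ t) * Real.sin (σ t) /
          ((1 + (k / 4) * (u t) ^ 2) * Real.sqrt (1 + τ ^ 2 * (u t) ^ 2))) s) ∧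
    (∀ s ∈ Set.Ioo a b,
      2 * H ^ 3 +
        H * (2 * ((1 + (k / 4) * (u s) ^ 2) /
              (u s * Real.sqrt (1 + τ ^ 2 * (u s) ^ 2))) *
            deriv (deriv (fun t => u t * Real.sqrt (1 + τ ^ 2 * (u t) ^ 2) /
              (1 + (k / 4) * (u t) ^ 2))) s +
          (1 / 2) * (k - 4 * τ ^ 2) * Real.cos (σ s) ^ 2 /
            (1 + τ ^ 2 * (u s) ^ 2) + k / 2) +
        (1 / 2) * (k - 4 * τ ^ 2) *
          ((1 + (k / 4) * (u s) ^ 2) /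
            (u s * Real.sqrt (1 + τ ^ 2 * (u s) ^ 2))) *
          deriv (fun t => u t * Real.cos (σ t) * Real.sin (σ t) /
            ((1 + (k / 4) * (u t) ^ 2) * Real.sqrt (1 + τ ^ 2 * (u t) ^ 2))) s
        = 0) :=
  cmc_sphere_satisfies_euler_lagrange_general k τ H a b u σ u' σ' hu_deriv hσ_deriv hu_pos hden_pos
    hode_u hode_σ hcmc
end

section
/- Let k, τ, H ∈ ℝ and L > 0. Suppose u, σ : [0, L] → ℝ are continuous on [0, L] and differentiable on (0, L), with u continuously differentiable on [0, L], u(0) = u(L) = 0, u(s) > 0 for s ∈ (0, L), 1 + (k/4)·u(s)² > 0 for all s ∈ [0, L], cos σ(0) = 1, cos σ(L) = −1, and for all s ∈ (0, L): u'(s) = (1 + (k/4)·u(s)²)·cos σ(s) and σ'(s) = 2H − (1/u(s) − (k/4)·u(s))·sin σ(s). Define the integrand G(s) = ((1/4)·(σ'(s) − (1/u(s) + (k/4)·u(s))·sin σ(s))² + σ'(s)·sin σ(s)/u(s) − (k/4)·sin² σ(s) + (k/4 − τ²)·cos² σ(s)/(1 + τ²·u(s)²) + k/4)·(u(s)·√(1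 + τ²·u(s)²)/(1 + (k/4)·u(s)²)), and assume G is interval-integrable on [0, L]. Then 2π·∫₀^L G(s) ds ≥ 4π, with equality if and only if sin σ(s) = H·u(s) for all s ∈ (0, L). -/
/-!
Along the ODE, the function `P = -cos σ · √(1 + τ²u²) / (1 + (k/4)u²)` satisfies `P' = G - Q` with
`Q = √(1 + τ²u²) / (u (1 + (k/4)u²)) · (H u - sin σ)² ≥ 0`. Since `P(0) = -1` and `P(L) = 1`, this
gives `∫₀^L G ≥ 2`, with equality exactly when `Q` vanishes, i.e. when `sin σ = H u`. Because `Q`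
may fail to be integrable up to the poles, the fundamental theorem of calculus is only used in its
one-sided form `F b - F a ≤ ∫ f` for `F' ≤ f` near the endpoints, and in its usual form on compact subintervals.
-/

open MeasureTheory intervalIntegral Real Set

section DefectIntegral

variable {f g F : ℝ → ℝ} {a b : ℝ}

theorem sub_le_integral_of_hasDerivAt_sub (hab : a ≤ b) (hF : ContinuousOn F (Icc a b))
    (hderiv : ∀ x ∈ Ioo a b, HasDerivAt F (f x - g x) x) (hg : ∀ x ∈ Ioo a b, 0 ≤ g x)
    (hf : IntervalIntegrable f volume a b) :
    F b - F a ≤ ∫ x in a..b, f x :=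
  sub_le_integral_of_hasDeriv_right_of_le hab hF (fun x hx => (hderiv x hx).hasDerivWithinAt)
    ((intervalIntegrable_iff_integrableOn_Icc_of_le hab).mp hf)
    (fun x hx => sub_le_self _ (hg x hx))

theorem sub_lt_integral_of_hasDerivAt_sub (hF : ContinuousOn F (Icc a b))
    (hderiv : ∀ x ∈ Ioo a b, HasDerivAt F (f x - g x) x) (hg : ∀ x ∈ Ioo a b, 0 ≤ g x)
    (hg_cont : ContinuousOn g (Ioo a b)) (hf : IntervalIntegrable f volume a b)
    {s : ℝ} (hs : s ∈ Ioo a b) (hgs : 0 < g s) :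
    F b - F a < ∫ x in a..b, f x := by
  obtain ⟨has, hsb⟩ := hs
  set c := (a + s) / 2
  set d := (s + b) / 2
  have hac : a < c := by simp only [c]; linarith
  have hcs : c < s := by simp only [c]; linarith
  have hsd : s < d := by simp only [d]; linarith
  have hdb : d < b := by simp only [d]; linarith
  have hcd : Icc c d ⊆ Ioo a b := Icc_subset_Ioo hac hdb
  have hf_sub : ∀ {x y}, x ∈ Icc a b → y ∈ Icc a b → IntervalIntegrable f volume x y := by
    rw [← uIcc_of_le (by linarith)]
    exact fun hx hy => hf.mono_set (uIcc_subset_uIcc hx hy)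
  have hg_int : IntervalIntegrable g volume c d :=
    (hg_cont.mono hcd).intervalIntegrable_of_Icc (by linarith)
  have hf_ac := hf_sub ⟨le_rfl, by linarith⟩ ⟨hac.le, by linarith⟩
  have hf_cd := hf_sub ⟨hac.le, by linarith⟩ ⟨by linarith, hdb.le⟩
  have hf_db := hf_sub ⟨by linarith, hdb.le⟩ ⟨by linarith, le_rfl⟩
  have hleft : F c - F a ≤ ∫ x in a..c, f x :=
    sub_le_integral_of_hasDerivAt_sub hac.le (hF.mono (Icc_subset_Icc_right (by linarith)))
      (fun x hx => hderiv x ⟨hx.1, by linarith [hx.2]⟩)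
      (fun x hx => hg x ⟨hx.1, by linarith [hx.2]⟩) hf_ac
  have hright : F b - F d ≤ ∫ x in d..b, f x :=
    sub_le_integral_of_hasDerivAt_sub hdb.le (hF.mono (Icc_subset_Icc_left (by linarith)))
      (fun x hx => hderiv x ⟨by linarith [hx.1], hx.2⟩)
      (fun x hx => hg x ⟨by linarith [hx.1], hx.2⟩) hf_db
  have hmiddle : ∫ x in c..d, f x = F d - F c + ∫ x in c..d, g x := by
    have := integral_eq_sub_of_hasDerivAt_of_le (by linarith)
      (hF.mono (hcd.trans Ioo_subset_Icc_self))
      (fun x hx => hderiv x (hcd (Ioo_subset_Icc_self hx))) (hf_cd.sub hg_int)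
    rw [integral_sub hf_cd hg_int] at this
    linarith
  have hg_pos : 0 < ∫ x in c..d, g x := by
    simpa using integral_lt_integral_of_continuousOn_of_le_of_exists_lt (by linarith)
      continuousOn_const (hg_cont.mono hcd) (fun x hx => hg x (hcd (Ioc_subset_Icc_self hx)))
      ⟨s, ⟨hcs.le, hsd.le⟩, hgs⟩
  rw [← integral_add_adjacent_intervals (hf_ac.trans hf_cd) hf_db,
    ← integral_add_adjacent_intervals hf_ac hf_cd]
  linarith

theorem integral_eq_sub_iff_of_hasDerivAt_sub (hab : a ≤ b) (hF : ContinuousOn F (Icc a b))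
    (hderiv : ∀ x ∈ Ioo a b, HasDerivAt F (f x - g x) x) (hg : ∀ x ∈ Ioo a b, 0 ≤ g x)
    (hg_cont : ContinuousOn g (Ioo a b)) (hf : IntervalIntegrable f volume a b) :
    ∫ x in a..b, f x = F b - F a ↔ ∀ x ∈ Ioo a b, g x = 0 := by
  refine ⟨fun heq x hx => ?_, fun hg0 => ?_⟩
  · by_contra hne
    exact (sub_lt_integral_of_hasDerivAt_sub hF hderiv hg hg_cont hf hx
      ((hg x hx).lt_of_ne' hne)).ne' heq
  · exact integral_eq_sub_of_hasDerivAt_of_le hab hF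
      (fun x hx => by simpa [hg0 x hx] using hderiv x hx) hf

end DefectIntegral

noncomputable section

/-- The integrand `G` of the statement, written in terms of `U = u`, `S = sin σ`, `C = cos σ`. -/
def willmoreDensity (k τ U S C σ' : ℝ) : ℝ :=
  ((1 / 4) * (σ' - (1 / U + (k / 4) * U) * S) ^ 2 + σ' * S / U - (k / 4) * S ^ 2 +
      (k / 4 - τ ^ 2) * C ^ 2 / (1 + τ ^ 2 * U ^ 2) + k / 4) *
    (U * √(1 + τ ^ 2 * U ^ 2) / (1 + (k / 4) * U ^ 2))

def cmcPotential (k τ U C : ℝ) : ℝ :=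
  -C * (√(1 + τ ^ 2 * U ^ 2) / (1 + (k / 4) * U ^ 2))

def cmcDefect (k τ H U S : ℝ) : ℝ :=
  √(1 + τ ^ 2 * U ^ 2) / (U * (1 + (k / 4) * U ^ 2)) * (H * U - S) ^ 2

end

theorem cmcPotential_zero (k τ C : ℝ) : cmcPotential k τ 0 C = -C := by
  simp [cmcPotential]

theorem cmcDefect_nonneg (k τ H : ℝ) {U : ℝ} (S : ℝ) (hU : 0 < U)
    (hd : 0 < 1 + (k / 4) * U ^ 2) : 0 ≤ cmcDefect k τ H U S := by
  unfold cmcDefect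
  positivity

theorem cmcDefect_eq_zero_iff (k τ H : ℝ) {U : ℝ} (S : ℝ) (hU : 0 < U)
    (hd : 0 < 1 + (k / 4) * U ^ 2) : cmcDefect k τ H U S = 0 ↔ S = H * U := by
  have hw : 0 < √(1 + τ ^ 2 * U ^ 2) / (U * (1 + (k / 4) * U ^ 2)) := by positivity
  rw [cmcDefect, mul_eq_zero_iff_left hw.ne', sq_eq_zero_iff, sub_eq_zero, eq_comm]

/-- The right-hand side is the derivative in `hasDerivAt_cmcPotential` with `u' = (1 + (k/4)U²) C`
and `σ'` given by the ODE, so this is the identity `P' = G - Q`. -/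
theorem willmoreDensity_sub_cmcDefect (k τ H U S C : ℝ) (hU : 0 < U)
    (hd : 0 < 1 + (k / 4) * U ^ 2) (hSC : S ^ 2 + C ^ 2 = 1) :
    willmoreDensity k τ U S C (2 * H - (1 / U - (k / 4) * U) * S) - cmcDefect k τ H U S =
      S * (2 * H - (1 / U - (k / 4) * U) * S) *
          (√(1 + τ ^ 2 * U ^ 2) / (1 + (k / 4) * U ^ 2))
        - C * U * ((1 + (k / 4) * U ^ 2) * C) *
          (2 * τ ^ 2 * (1 + (k / 4) * U ^ 2) - k * √(1 + τ ^ 2 * U ^ 2) ^ 2) /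
            (2 * √(1 + τ ^ 2 * U ^ 2) * (1 + (k / 4) * U ^ 2) ^ 2) := by
  have hb : 0 < 1 + τ ^ 2 * U ^ 2 := by positivity
  have hr : √(1 + τ ^ 2 * U ^ 2) ^ 2 = 1 + τ ^ 2 * U ^ 2 := sq_sqrt hb.le
  have hr0 : √(1 + τ ^ 2 * U ^ 2) ≠ 0 := (sqrt_pos.mpr hb).ne'
  have hd' : 4 + U ^ 2 * k ≠ 0 := by linarith
  unfold willmoreDensity cmcDefect
  generalize √(1 + τ ^ 2 * U ^ 2) = r at *
  rw [← hr]
  field_simp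
  linear_combination (-32 * U ^ 2 * k * r ^ 2) * hSC - 32 * U ^ 2 * k * C ^ 2 * hr

section Profile

variable {k τ : ℝ} {u σ : ℝ → ℝ}

theorem hasDerivAt_cmcPotential {u' σ' s : ℝ} (hu : HasDerivAt u u' s)
    (hσ : HasDerivAt σ σ' s) (hd : 1 + (k / 4) * u s ^ 2 ≠ 0) :
    HasDerivAt (fun x => cmcPotential k τ (u x) (cos (σ x)))
      (sin (σ s) * σ' * (√(1 + τ ^ 2 * u s ^ 2) / (1 + (k / 4) * u s ^ 2))
        - cos (σ s) * u s * u' *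
          (2 * τ ^ 2 * (1 + (k / 4) * u s ^ 2) - k * √(1 + τ ^ 2 * u s ^ 2) ^ 2) /
            (2 * √(1 + τ ^ 2 * u s ^ 2) * (1 + (k / 4) * u s ^ 2) ^ 2)) s := by
  have hb : 0 < 1 + τ ^ 2 * u s ^ 2 := by positivity
  have hr0 : √(1 + τ ^ 2 * u s ^ 2) ≠ 0 := (sqrt_pos.mpr hb).ne'
  have hr := (((hu.fun_pow 2).const_mul (τ ^ 2)).const_add 1).sqrt hb.ne'
  have hd' := ((hu.fun_pow 2).const_mul (k / 4)).const_add 1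
  refine (hσ.cos.fun_neg.fun_mul (hr.fun_div hd' hd)).congr_deriv ?_
  field_simp
  ring

theorem hasDerivAt_cmcPotential_of_ode {H u' σ' s : ℝ} (hu : HasDerivAt u u' s)
    (hσ : HasDerivAt σ σ' s) (hu_pos : 0 < u s) (hd : 0 < 1 + (k / 4) * u s ^ 2)
    (hode_u : u' = (1 + (k / 4) * u s ^ 2) * cos (σ s))
    (hode_σ : σ' = 2 * H - (1 / u s - (k / 4) * u s) * sin (σ s)) :
    HasDerivAt (fun x => cmcPotential k τ (u x) (cos (σ x)))
      (willmoreDensity k τ (u s) (sin (σ s)) (cos (σ s)) σ' - cmcDefect k τ H (u s) (sin (σ s)))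
      s := by
  subst hode_u hode_σ
  rw [willmoreDensity_sub_cmcDefect k τ H _ _ _ hu_pos hd (sin_sq_add_cos_sq _)]
  exact hasDerivAt_cmcPotential hu hσ hd.ne'

theorem continuousOn_cmcPotential {t : Set ℝ} (hu : ContinuousOn u t) (hσ : ContinuousOn σ t)
    (hd : ∀ x ∈ t, 1 + (k / 4) * u x ^ 2 ≠ 0) :
    ContinuousOn (fun x => cmcPotential k τ (u x) (cos (σ x))) t := by
  unfold cmcPotential
  fun_prop (disch := assumption)

theorem continuousOn_cmcDefect (H : ℝ) {t : Set ℝ} (hu : ContinuousOn u t)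
    (hσ : ContinuousOn σ t) (hu0 : ∀ x ∈ t, u x ≠ 0)
    (hd : ∀ x ∈ t, 1 + (k / 4) * u x ^ 2 ≠ 0) :
    ContinuousOn (fun x => cmcDefect k τ H (u x) (sin (σ x))) t := by
  unfold cmcDefect
  fun_prop (disch := intro x hx; exact mul_ne_zero (hu0 x hx) (hd x hx))

end Profile

theorem willmore_like_energy_ge_four_pi_general
    (k τ H L : ℝ) (hL : 0 < L) (u σ u' σ' : ℝ → ℝ)
    (hu_cont : ContinuousOn u (Set.Icc 0 L))
    (hσ_cont : ContinuousOn σ (Set.Icc 0 L))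
    (hu_deriv : ∀ s ∈ Set.Icc 0 L, HasDerivWithinAt u (u' s) (Set.Icc 0 L) s)
    (hσ_deriv : ∀ s ∈ Set.Ioo 0 L, HasDerivAt σ (σ' s) s)
    (hu0 : u 0 = 0) (huL : u L = 0)
    (hu_pos : ∀ s ∈ Set.Ioo 0 L, 0 < u s)
    (hden_pos : ∀ s ∈ Set.Icc 0 L, 0 < 1 + (k / 4) * (u s) ^ 2)
    (hσ0 : Real.cos (σ 0) = 1) (hσL : Real.cos (σ L) = -1)
    (hode_u : ∀ s ∈ Set.Ioo 0 L,
      u' s = (1 + (k / 4) * (u s) ^ 2) * Real.cos (σ s))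
    (hode_σ : ∀ s ∈ Set.Ioo 0 L,
      σ' s = 2 * H - (1 / u s - (k / 4) * u s) * Real.sin (σ s))
    (hint : IntervalIntegrable
      (fun s => ((1 / 4) * (σ' s - (1 / u s + (k / 4) * u s) *
            Real.sin (σ s)) ^ 2 +
          σ' s * Real.sin (σ s) / u s - (k / 4) * Real.sin (σ s) ^ 2 +
          (k / 4 - τ ^ 2) * Real.cos (σ s) ^ 2 / (1 + τ ^ 2 * (u s) ^ 2) +
          k / 4) *
        (u s * Real.sqrt (1 + τ ^ 2 * (u s) ^ 2) / (1 + (k / 4) * (u s) ^ 2)))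
      volume 0 L) :
    4 * Real.pi ≤ 2 * Real.pi *
      ∫ s in (0 : ℝ)..L,
        ((1 / 4) * (σ' s - (1 / u s + (k / 4) * u s) * Real.sin (σ s)) ^ 2 +
            σ' s * Real.sin (σ s) / u s - (k / 4) * Real.sin (σ s) ^ 2 +
            (k / 4 - τ ^ 2) * Real.cos (σ s) ^ 2 / (1 + τ ^ 2 * (u s) ^ 2) +
            k / 4) *
          (u s * Real.sqrt (1 + τ ^ 2 * (u s) ^ 2) /
            (1 + (k / 4) * (u s) ^ 2)) ∧
    (2 * Real.pi *
      ∫ s in (0 : ℝ)..L,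
        ((1 / 4) * (σ' s - (1 / u s + (k / 4) * u s) * Real.sin (σ s)) ^ 2 +
            σ' s * Real.sin (σ s) / u s - (k / 4) * Real.sin (σ s) ^ 2 +
            (k / 4 - τ ^ 2) * Real.cos (σ s) ^ 2 / (1 + τ ^ 2 * (u s) ^ 2) +
            k / 4) *
          (u s * Real.sqrt (1 + τ ^ 2 * (u s) ^ 2) /
            (1 + (k / 4) * (u s) ^ 2)) = 4 * Real.pi ↔
      ∀ s ∈ Set.Ioo 0 L, Real.sin (σ s) = H * u s) := by
  have hP := continuousOn_cmcPotential (τ := τ) hu_cont hσ_cont fun s hs => (hden_pos s hs).ne'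
  have hderiv : ∀ s ∈ Ioo 0 L, HasDerivAt (fun x => cmcPotential k τ (u x) (cos (σ x)))
      (willmoreDensity k τ (u s) (sin (σ s)) (cos (σ s)) (σ' s) -
        cmcDefect k τ H (u s) (sin (σ s))) s := fun s hs =>
    hasDerivAt_cmcPotential_of_ode ((hu_deriv s (Ioo_subset_Icc_self hs)).hasDerivAt
      (Icc_mem_nhds hs.1 hs.2)) (hσ_deriv s hs) (hu_pos s hs)
      (hden_pos s (Ioo_subset_Icc_self hs)) (hode_u s hs) (hode_σ s hs)
  have hQ_nonneg : ∀ s ∈ Ioo 0 L, 0 ≤ cmcDefect k τ H (u s) (sin (σ s)) := fun s hs =>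
    cmcDefect_nonneg k τ H _ (hu_pos s hs) (hden_pos s (Ioo_subset_Icc_self hs))
  have hQ_cont := continuousOn_cmcDefect (τ := τ) H (hu_cont.mono Ioo_subset_Icc_self)
    (hσ_cont.mono Ioo_subset_Icc_self) (fun s hs => (hu_pos s hs).ne')
    fun s hs => (hden_pos s (Ioo_subset_Icc_self hs)).ne'
  have hends : cmcPotential k τ (u L) (cos (σ L)) - cmcPotential k τ (u 0) (cos (σ 0)) = 2 := by
    rw [hu0, huL, cmcPotential_zero, cmcPotential_zero, hσ0, hσL]
    norm_num
  have hle := sub_le_integral_of_hasDerivAt_sub hL.le hP hderiv hQ_nonneg hint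
  have hiff := integral_eq_sub_iff_of_hasDerivAt_sub hL.le hP hderiv hQ_nonneg hQ_cont hint
  simp only [hends] at hle hiff
  change 4 * π ≤ 2 * π * ∫ s in (0 : ℝ)..L, willmoreDensity k τ (u s) (sin (σ s)) (cos (σ s)) (σ' s)
    ∧ (2 * π * ∫ s in (0 : ℝ)..L, willmoreDensity k τ (u s) (sin (σ s)) (cos (σ s)) (σ' s) = 4 * π
      ↔ _)
  refine ⟨by nlinarith [pi_pos], ?_⟩
  rw [show 4 * π = 2 * π * 2 by ring, mul_right_inj' (by positivity), hiff]
  exact forall₂_congr fun s hs =>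
    cmcDefect_eq_zero_iff k τ H _ (hu_pos s hs) (hden_pos s (Ioo_subset_Icc_self hs))

/-- For a rotationally invariant sphere profile of constant mean curvature `H` in
`E(k,τ)`, the Willmore-like energy `2π∫₀^L G` is at least `4π`, with equality if
and only if `sin σ = H·u` on `(0, L)` (i.e. exactly at the CMC spheres). -/
theorem willmore_like_energy_ge_four_pi
    (k τ H L : ℝ) (hL : 0 < L) (u σ u' σ' : ℝ → ℝ)
    (hu_cont : ContinuousOn u (Set.Icc 0 L))
    (hσ_cont : ContinuousOn σ (Set.Icc 0 L))
    (hu_deriv : ∀ s ∈ Set.Icc 0 L, HasDerivWithinAt u (u' s) (Set.Icc 0 L) s)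
    (hu'_cont : ContinuousOn u' (Set.Icc 0 L))
    (hσ_deriv : ∀ s ∈ Set.Ioo 0 L, HasDerivAt σ (σ' s) s)
    (hu0 : u 0 = 0) (huL : u L = 0)
    (hu_pos : ∀ s ∈ Set.Ioo 0 L, 0 < u s)
    (hden_pos : ∀ s ∈ Set.Icc 0 L, 0 < 1 + (k / 4) * (u s) ^ 2)
    (hσ0 : Real.cos (σ 0) = 1) (hσL : Real.cos (σ L) = -1)
    (hode_u : ∀ s ∈ Set.Ioo 0 L,
      u' s = (1 + (k / 4) * (u s) ^ 2) * Real.cos (σ s))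
    (hode_σ : ∀ s ∈ Set.Ioo 0 L,
      σ' s = 2 * H - (1 / u s - (k / 4) * u s) * Real.sin (σ s))
    (hint : IntervalIntegrable
      (fun s => ((1 / 4) * (σ' s - (1 / u s + (k / 4) * u s) *
            Real.sin (σ s)) ^ 2 +
          σ' s * Real.sin (σ s) / u s - (k / 4) * Real.sin (σ s) ^ 2 +
          (k / 4 - τ ^ 2) * Real.cos (σ s) ^ 2 / (1 + τ ^ 2 * (u s) ^ 2) +
          k / 4) *
        (u s * Real.sqrt (1 + τ ^ 2 * (u s) ^ 2) / (1 + (k / 4) * (u s) ^ 2)))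
      volume 0 L) :
    4 * Real.pi ≤ 2 * Real.pi *
      ∫ s in (0 : ℝ)..L,
        ((1 / 4) * (σ' s - (1 / u s + (k / 4) * u s) * Real.sin (σ s)) ^ 2 +
            σ' s * Real.sin (σ s) / u s - (k / 4) * Real.sin (σ s) ^ 2 +
            (k / 4 - τ ^ 2) * Real.cos (σ s) ^ 2 / (1 + τ ^ 2 * (u s) ^ 2) +
            k / 4) *
          (u s * Real.sqrt (1 + τ ^ 2 * (u s) ^ 2) /
            (1 + (k / 4) * (u s) ^ 2)) ∧
    (2 * Real.pi *
      ∫ s in (0 : ℝ)..L,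
        ((1 / 4) * (σ' s - (1 / u s + (k / 4) * u s) * Real.sin (σ s)) ^ 2 +
            σ' s * Real.sin (σ s) / u s - (k / 4) * Real.sin (σ s) ^ 2 +
            (k / 4 - τ ^ 2) * Real.cos (σ s) ^ 2 / (1 + τ ^ 2 * (u s) ^ 2) +
            k / 4) *
          (u s * Real.sqrt (1 + τ ^ 2 * (u s) ^ 2) /
            (1 + (k / 4) * (u s) ^ 2)) = 4 * Real.pi ↔
      ∀ s ∈ Set.Ioo 0 L, Real.sin (σ s) = H * u s) :=
  willmore_like_energy_ge_four_pi_general k τ H L hL u σ u' σ' hu_cont hσ_cont hu_deriv hσ_deriv hu0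
    huL hu_pos hden_pos hσ0 hσL hode_u hode_σ hint
end

section
/- Let k ∈ ℝ and H > 0 with 4H² + k > 0. Then there exist a real number L > 0 and continuously differentiable functions u, σ : [0, L] → ℝ such that: u(0) = u(L) = 0; u(s) > 0 for all s ∈ (0, L); 1 + (k/4)·u(s)² > 0 for all s ∈ [0, L]; σ(0) = 0 and σ(L) = π; sin σ(s) = H·u(s) for all s ∈ [0, L]; and for all s ∈ (0, L): u'(s) = (1 + (k/4)·u(s)²)·cos σ(s) and σ'(s) = 2H − (1/u(s) − (k/4)·u(s))·sin σ(s). -/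
/-!
On a profile with `sin σ = H u`, the `σ`-equation becomes the autonomous equation
`σ' = H + (k / 4H) sin² σ`, whose right-hand side is positive and bounded because
`4H² + k > 0`. Its solution through `σ(0) = 0` is increasing and onto `ℝ`, so it reaches `π` at
some `L > 0`, and `u := sin σ / H` then satisfies the `u`-equation and vanishes exactly at
`0` and `L`.
-/

open Filter Real

section AutonomousODE

variable {f : ℝ → ℝ}

theorem hasDerivAt_integral_inv (hf : Continuous f) (hpos : ∀ θ, 0 < f θ) (θ : ℝ) :
    HasDerivAt (fun θ => ∫ t in (0 : ℝ)..θ, (f t)⁻¹) (f θ)⁻¹ θ :=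
  have hinv : Continuous fun t => (f t)⁻¹ := hf.inv₀ fun t => (hpos t).ne'
  intervalIntegral.integral_hasDerivAt_right (hinv.intervalIntegrable _ _)
    (hinv.stronglyMeasurableAtFilter _ _) hinv.continuousAt

/-- Separation of variables: `φ` is the inverse of `θ ↦ ∫₀^θ 1/f`, which grows at rate at
least `1/M` and is therefore onto. -/
theorem exists_orderIso_hasDerivAt_of_pos_of_le {M : ℝ} (hf : Continuous f)
    (hpos : ∀ θ, 0 < f θ) (hle : ∀ θ, f θ ≤ M) :
    ∃ φ : ℝ ≃o ℝ, φ 0 = 0 ∧ ∀ s, HasDerivAt φ (f (φ s)) s := by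
  set g : ℝ → ℝ := fun θ => ∫ t in (0 : ℝ)..θ, (f t)⁻¹
  have hg := hasDerivAt_integral_inv hf hpos
  have hgd : Differentiable ℝ g := fun θ => (hg θ).differentiableAt
  have hmono : StrictMono g :=
    strictMono_of_deriv_pos fun θ => (hg θ).deriv ▸ inv_pos.2 (hpos θ)
  have hM : 0 < M⁻¹ := inv_pos.2 ((hpos 0).trans_le (hle 0))
  have hgrowth : ∀ ⦃x y⦄, x ≤ y → M⁻¹ * (y - x) ≤ g y - g x :=
    mul_sub_le_image_sub_of_le_deriv hgd fun θ =>
      (hg θ).deriv ▸ inv_anti₀ (hpos θ) (hle θ)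
  have hg0 : g 0 = 0 := intervalIntegral.integral_same
  have htop : Tendsto g atTop atTop := by
    refine tendsto_atTop_mono' _ (eventually_atTop.2 ⟨0, fun θ hθ => ?_⟩)
      (tendsto_id.const_mul_atTop hM)
    simpa [hg0] using hgrowth hθ
  have hbot : Tendsto g atBot atBot := by
    refine tendsto_atBot_mono' _ (eventually_atBot.2 ⟨0, fun θ hθ => ?_⟩)
      (tendsto_id.const_mul_atBot hM)
    have := hgrowth hθ
    rw [hg0] at this
    show g θ ≤ M⁻¹ * θ
    linarith
  set e := hmono.orderIsoOfSurjective g (hgd.continuous.surjective htop hbot)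
  refine ⟨e.symm, e.injective (by simp [e, hg0]), fun s => ?_⟩
  have h := (hg (e.symm s)).of_local_left_inverse e.symm.continuous.continuousAt
    (inv_pos.2 (hpos _)).ne' (Eventually.of_forall e.apply_symm_apply)
  rwa [inv_inv] at h

end AutonomousODE

/-- The right-hand side of `σ' = 2H − (1/u − (k/4)u) sin σ` after substituting
`u = sin σ / H`. -/
noncomputable def cmcAngularSpeed (k H θ : ℝ) : ℝ := H + k / (4 * H) * sin θ ^ 2

section CMCProfile

variable {k H : ℝ}

theorem continuous_cmcAngularSpeed : Continuous (cmcAngularSpeed k H) := by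
  unfold cmcAngularSpeed; fun_prop

/-- `4H² + k sin² θ` is affine in `sin² θ ∈ [0, 1]`, positive at both ends. -/
theorem four_mul_sq_add_mul_sin_sq_pos (hH : H ≠ 0) (hHk : 0 < 4 * H ^ 2 + k) (θ : ℝ) :
    0 < 4 * H ^ 2 + k * sin θ ^ 2 := by
  have hH2 : 0 < H ^ 2 := by positivity
  rcases le_or_gt 0 k with hk | hk
  · nlinarith [sq_nonneg (sin θ)]
  · nlinarith [sin_sq_le_one θ]

theorem cmcAngularSpeed_pos (hH : 0 < H) (hHk : 0 < 4 * H ^ 2 + k) (θ : ℝ) :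
    0 < cmcAngularSpeed k H θ := by
  have : cmcAngularSpeed k H θ = (4 * H ^ 2 + k * sin θ ^ 2) / (4 * H) := by
    unfold cmcAngularSpeed; field_simp
  rw [this]
  exact div_pos (four_mul_sq_add_mul_sin_sq_pos hH.ne' hHk θ) (by positivity)

theorem cmcAngularSpeed_le (hH : 0 < H) (θ : ℝ) :
    cmcAngularSpeed k H θ ≤ H + |k| / (4 * H) := by
  have : k * sin θ ^ 2 ≤ |k| := by
    calc k * sin θ ^ 2 ≤ |k| * sin θ ^ 2 := by gcongr; exact le_abs_self k
      _ ≤ |k| := mul_le_of_le_one_right (abs_nonneg k) (sin_sq_le_one θ)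
  unfold cmcAngularSpeed
  rw [div_mul_eq_mul_div]
  gcongr

theorem one_add_mul_sq_sin_div_pos (hH : H ≠ 0) (hHk : 0 < 4 * H ^ 2 + k) (θ : ℝ) :
    0 < 1 + k / 4 * (sin θ / H) ^ 2 := by
  have : 1 + k / 4 * (sin θ / H) ^ 2 = (4 * H ^ 2 + k * sin θ ^ 2) / (4 * H ^ 2) := by
    field_simp
  rw [this]
  exact div_pos (four_mul_sq_add_mul_sin_sq_pos hH hHk θ) (by positivity)

theorem cmcAngularSpeed_eq (hH : H ≠ 0) {θ : ℝ} (hθ : sin θ ≠ 0) :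
    cmcAngularSpeed k H θ = 2 * H - (1 / (sin θ / H) - k / 4 * (sin θ / H)) * sin θ := by
  unfold cmcAngularSpeed
  field_simp
  ring

theorem hasDerivAt_sin_div_of_cmcAngularSpeed {σ : ℝ → ℝ} {s : ℝ} (hH : H ≠ 0)
    (hσ : HasDerivAt σ (cmcAngularSpeed k H (σ s)) s) :
    HasDerivAt (fun s => sin (σ s) / H)
      ((1 + k / 4 * (sin (σ s) / H) ^ 2) * cos (σ s)) s := by
  refine (hσ.sin.div_const H).congr_deriv ?_
  unfold cmcAngularSpeed
  field_simp

end CMCProfile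

/-- Existence of rotationally invariant CMC spheres in `E(k,τ)`: for `H > 0` with
`4H² + k > 0` there is a profile curve, i.e. `L > 0` and continuously
differentiable `u, σ : [0, L] → ℝ` with `u(0) = u(L) = 0`, `u > 0` on `(0, L)`,
`1 + (k/4)u² > 0` on `[0, L]`, `σ(0) = 0`, `σ(L) = π`, `sin σ = H·u` on `[0, L]`,
solving `u' = (1 + (k/4)u²)·cos σ`, `σ' = 2H − (1/u − (k/4)u)·sin σ` on `(0, L)`. -/
theorem exists_cmc_sphere_profile
    (k H : ℝ) (hH : 0 < H) (hHk : 0 < 4 * H ^ 2 + k) :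
    ∃ (L : ℝ) (u σ : ℝ → ℝ), 0 < L ∧
      ContDiffOn ℝ 1 u (Set.Icc 0 L) ∧
      ContDiffOn ℝ 1 σ (Set.Icc 0 L) ∧
      u 0 = 0 ∧ u L = 0 ∧
      (∀ s ∈ Set.Ioo 0 L, 0 < u s) ∧
      (∀ s ∈ Set.Icc 0 L, 0 < 1 + (k / 4) * (u s) ^ 2) ∧
      σ 0 = 0 ∧ σ L = Real.pi ∧
      (∀ s ∈ Set.Icc 0 L, Real.sin (σ s) = H * u s) ∧
      (∀ s ∈ Set.Ioo 0 L,
        HasDerivAt u ((1 + (k / 4) * (u s) ^ 2) * Real.cos (σ s)) s ∧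
        HasDerivAt σ (2 * H - (1 / u s - (k / 4) * u s) * Real.sin (σ s)) s) := by
  obtain ⟨σ, hσ0, hσ'⟩ := exists_orderIso_hasDerivAt_of_pos_of_le continuous_cmcAngularSpeed
    (cmcAngularSpeed_pos hH hHk) (cmcAngularSpeed_le (k := k) hH)
  have hσC1 : ContDiff ℝ 1 σ := by
    rw [contDiff_one_iff_deriv, funext fun s => (hσ' s).deriv]
    exact ⟨fun s => (hσ' s).differentiableAt, continuous_cmcAngularSpeed.comp σ.continuous⟩
  have hsin : ∀ s ∈ Set.Ioo 0 (σ.symm π), 0 < sin (σ s) := fun s hs =>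
    sin_pos_of_pos_of_lt_pi (hσ0 ▸ σ.strictMono hs.1)
      (σ.apply_symm_apply π ▸ σ.strictMono hs.2)
  refine ⟨σ.symm π, fun s => sin (σ s) / H, σ, ?_, (hσC1.sin.div_const H).contDiffOn,
    hσC1.contDiffOn, by simp [hσ0], by simp, fun s hs => div_pos (hsin s hs) hH,
    fun s _ => one_add_mul_sq_sin_div_pos hH.ne' hHk _, hσ0, σ.apply_symm_apply π,
    fun s _ => by field_simp,
    fun s hs => ⟨hasDerivAt_sin_div_of_cmcAngularSpeed hH.ne' (hσ' s), ?_⟩⟩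
  · exact σ.lt_symm_apply.2 (by rw [hσ0]; exact pi_pos)
  · simpa only [cmcAngularSpeed_eq hH.ne' (hsin s hs).ne'] using hσ' s
end

section
/- Let k ≤ 0 and H ∈ ℝ with 4H² + k ≤ 0. Then there exist no real number L > 0 and functions u, σ : [0, L] → ℝ, continuous on [0, L] and differentiable on (0, L), such that: u(0) = u(L) = 0; u(s) > 0 for all s ∈ (0, L); 1 + (k/4)·u(s)² > 0 for all s ∈ [0, L]; cos σ(0) = 1 and cos σ(L) = −1; and for all s ∈ (0, L): u'(s) = (1 + (k/4)·u(s)²)·cos σ(s) and σ'(s) = 2H − (1/u(s) − (k/4)·u(s))·sin σ(s). -/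
/-!
Write `w = 1/u - (k/4)u` for the coefficient of `sin σ` in the equation for `σ'`. Since
`(1/u)·((k/4)u) = k/4`, one has `w² = ((1 + (k/4)u²)/u)² - k > -k ≥ 4H²`, so `|2H| < w` wherever
`0 < u` and `1 + (k/4)u² > 0`. Hence `σ' = 2H - w < 0` whenever `sin σ = 1` and `σ' > 0` whenever
`sin σ = -1`: starting from `σ(0) ≡ 0 (mod 2π)`, the angle `σ` can never leave the band
`[σ(0) - π/2, σ(0) + π/2]`, so `cos σ(L) ≥ 0`, contradicting `cos σ(L) = -1`.
-/

open Set Topology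

theorem le_of_hasDerivAt_neg_of_eq {f : ℝ → ℝ} {a b c : ℝ} (hf : ContinuousOn f (Icc a b))
    (ha : f a < c) (hc : ∀ t ∈ Ioo a b, f t = c → ∃ d < 0, HasDerivAt f d t) :
    ∀ s ∈ Icc a b, f s ≤ c := by
  intro s hs
  by_contra! hcs
  -- At the first `t₀` with `f t₀ = c`, `f' t₀ < 0` would force `f > c` just before `t₀`.
  set S := Icc a s ∩ f ⁻¹' Ici c
  have hsub : Icc a s ⊆ Icc a b := Icc_subset_Icc_right hs.2
  have hbdd : BddBelow S := ⟨a, fun t ht => ht.1.1⟩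
  have hmem : sInf S ∈ S :=
    ((hf.mono hsub).preimage_isClosed_of_isClosed isClosed_Icc isClosed_Ici).csInf_mem
      ⟨s, ⟨hs.1, le_rfl⟩, hcs.le⟩ hbdd
  set t₀ := sInf S
  have hft₀ : f t₀ = c := by
    obtain ⟨t, ht, hft⟩ := intermediate_value_Icc hmem.1.1
      (hf.mono ((Icc_subset_Icc_right hmem.1.2).trans hsub)) ⟨ha.le, hmem.2⟩
    have ht₀t : t₀ ≤ t := csInf_le hbdd ⟨⟨ht.1, ht.2.trans hmem.1.2⟩, hft.ge⟩
    rwa [le_antisymm ht.2 ht₀t] at hft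
  have hat₀ : a < t₀ := hmem.1.1.lt_of_ne fun h => by rw [← h] at hft₀; linarith
  have ht₀s : t₀ < s := hmem.1.2.lt_of_ne fun h => by rw [h] at hft₀; linarith
  obtain ⟨d, hd, hder⟩ := hc t₀ ⟨hat₀, ht₀s.trans_le hs.2⟩ hft₀
  have hslope : ∀ᶠ t in 𝓝[<] t₀, slope f t₀ t < 0 :=
    (hasDerivAt_iff_tendsto_slope_left_right.mp hder).1.eventually (gt_mem_nhds hd)
  obtain ⟨t, hslope_t, hat, htt₀⟩ := (hslope.and (Ioo_mem_nhdsLT hat₀)).exists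
  have hcft : c < f t := by
    have := sub_smul_slope f t₀ t
    rw [smul_eq_mul, vsub_eq_sub, hft₀] at this
    nlinarith [mul_pos_of_neg_of_neg (sub_neg.mpr htt₀) hslope_t]
  have := csInf_le hbdd ⟨⟨hat.le, htt₀.le.trans hmem.1.2⟩, hcft.le⟩
  linarith

theorem cos_nonneg_of_hasDerivAt_of_sin_eq_one {σ : ℝ → ℝ} {a b : ℝ}
    (hσ : ContinuousOn σ (Icc a b)) (ha : Real.cos (σ a) = 1)
    (h_top : ∀ t ∈ Ioo a b, Real.sin (σ t) = 1 → ∃ d < 0, HasDerivAt σ d t)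
    (h_bot : ∀ t ∈ Ioo a b, Real.sin (σ t) = -1 → ∃ d > 0, HasDerivAt σ d t) :
    ∀ s ∈ Icc a b, 0 ≤ Real.cos (σ s) := by
  have hπ := Real.pi_pos
  have hsin : Real.sin (σ a) = 0 := by nlinarith [Real.sin_sq_add_cos_sq (σ a)]
  have hle : ∀ s ∈ Icc a b, σ s ≤ σ a + Real.pi / 2 := by
    refine le_of_hasDerivAt_neg_of_eq hσ (by linarith) fun t ht heq => h_top t ht ?_
    rw [heq, Real.sin_add_pi_div_two, ha]
  have hge : ∀ s ∈ Icc a b, -σ s ≤ -(σ a - Real.pi / 2) := by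
    refine le_of_hasDerivAt_neg_of_eq hσ.neg (by linarith) fun t ht heq => ?_
    obtain ⟨d, hd, hder⟩ := h_bot t ht (by
      rw [show σ t = σ a - Real.pi / 2 by linarith [neg_inj.mp heq], Real.sin_sub_pi_div_two, ha])
    exact ⟨-d, neg_neg_of_pos hd, hder.neg⟩
  intro s hs
  have hcos : Real.cos (σ s) = Real.cos (σ s - σ a) := by
    rw [Real.cos_sub, ha, hsin]; ring
  rw [hcos]
  exact Real.cos_nonneg_of_mem_Icc ⟨by linarith [hge s hs], by linarith [hle s hs]⟩

theorem abs_two_mul_lt_inv_sub_mul {k H u : ℝ} (hu : 0 < u) (hku : 0 < 1 + k / 4 * u ^ 2)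
    (hHk : 4 * H ^ 2 + k ≤ 0) : |2 * H| < 1 / u - k / 4 * u := by
  have hk : k ≤ 0 := by nlinarith [sq_nonneg H]
  have hw : 0 < 1 / u - k / 4 * u := by
    have : 0 < 1 / u := by positivity
    nlinarith
  have hsq : (1 / u - k / 4 * u) ^ 2 = ((1 + k / 4 * u ^ 2) / u) ^ 2 - k := by
    field_simp
    ring
  refine abs_lt_of_sq_lt_sq ?_ hw.le
  have : 0 < ((1 + k / 4 * u ^ 2) / u) ^ 2 := by positivity
  nlinarith

theorem no_cmc_sphere_profile_of_small_H_general
    (k H : ℝ) (hHk : 4 * H ^ 2 + k ≤ 0) :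
    ¬ ∃ (L : ℝ) (u σ : ℝ → ℝ), 0 < L ∧
      ContinuousOn u (Set.Icc 0 L) ∧
      ContinuousOn σ (Set.Icc 0 L) ∧
      u 0 = 0 ∧ u L = 0 ∧
      (∀ s ∈ Set.Ioo 0 L, 0 < u s) ∧
      (∀ s ∈ Set.Icc 0 L, 0 < 1 + (k / 4) * (u s) ^ 2) ∧
      Real.cos (σ 0) = 1 ∧ Real.cos (σ L) = -1 ∧
      (∀ s ∈ Set.Ioo 0 L,
        HasDerivAt u ((1 + (k / 4) * (u s) ^ 2) * Real.cos (σ s)) s ∧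
        HasDerivAt σ (2 * H - (1 / u s - (k / 4) * u s) * Real.sin (σ s)) s) := by
  rintro ⟨L, u, σ, hL, -, hσ, -, -, hu, hku, hcos0, hcosL, hode⟩
  have hw : ∀ t ∈ Ioo 0 L, |2 * H| < 1 / u t - k / 4 * u t := fun t ht =>
    abs_two_mul_lt_inv_sub_mul (hu t ht) (hku t (Ioo_subset_Icc_self ht)) hHk
  have hcos_nonneg := cos_nonneg_of_hasDerivAt_of_sin_eq_one hσ hcos0
    (fun t ht hsin => ⟨_, by rw [hsin]; linarith [(abs_lt.mp (hw t ht)).2], (hode t ht).2⟩)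
    (fun t ht hsin => ⟨_, by rw [hsin]; linarith [(abs_lt.mp (hw t ht)).1], (hode t ht).2⟩)
    L ⟨hL.le, le_rfl⟩
  linarith

/-- Nonexistence of rotationally invariant CMC spheres in `E(k,τ)` for `k ≤ 0`
and `4H² + k ≤ 0`: there is no `L > 0` and profile functions `u, σ : [0, L] → ℝ`,
continuous on `[0, L]` and differentiable on `(0, L)`, with `u(0) = u(L) = 0`,
`u > 0` on `(0, L)`, `1 + (k/4)u² > 0` on `[0, L]`, `cos σ(0) = 1`,
`cos σ(L) = −1`, solving `u' = (1 + (k/4)u²)·cos σ`,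
`σ' = 2H − (1/u − (k/4)u)·sin σ` on `(0, L)`. -/
theorem no_cmc_sphere_profile_of_small_H
    (k H : ℝ) (hk : k ≤ 0) (hHk : 4 * H ^ 2 + k ≤ 0) :
    ¬ ∃ (L : ℝ) (u σ : ℝ → ℝ), 0 < L ∧
      ContinuousOn u (Set.Icc 0 L) ∧
      ContinuousOn σ (Set.Icc 0 L) ∧
      u 0 = 0 ∧ u L = 0 ∧
      (∀ s ∈ Set.Ioo 0 L, 0 < u s) ∧
      (∀ s ∈ Set.Icc 0 L, 0 < 1 + (k / 4) * (u s) ^ 2) ∧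
      Real.cos (σ 0) = 1 ∧ Real.cos (σ L) = -1 ∧
      (∀ s ∈ Set.Ioo 0 L,
        HasDerivAt u ((1 + (k / 4) * (u s) ^ 2) * Real.cos (σ s)) s ∧
        HasDerivAt σ (2 * H - (1 / u s - (k / 4) * u s) * Real.sin (σ s)) s) :=
  no_cmc_sphere_profile_of_small_H_general k H hHk
end
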